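/- Let 1 ≤ δ ≤ σ, ρ₀ > 0, and for ρ with ρ₀/4 ≤ ρ ≤ ρ₀ define M_{ρ,β} = ρ^{|β|+1}(|β|+1)^{6+2σ}/((β₂!)^{σ-δ}(|β|!)^δ) for β = (β₁,β₂) ∈ ℤ₊². Then there is a constant C > 0 such that for all β ∈ ℤ₊² and all γ ≤ β (componentwise) with 0 ≤ |γ| ≤ ⌊|β|/2⌋, one has binom(β,γ) · M_{ρ,β}/(M_{ρ,γ} · M_{ρ,β-γ}) ≤ C/(|γ|+1)^6, where binom(β,γ) = binom(β₁,γ₁)·binom(β₂,γ₂) and |β| = β₁ + β₂. -/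
import Mathlib


/-- `M_{ρ,β} = ρ^{|β|+1} (|β|+1)^{6+2σ} / ((β₂!)^{σ-δ} (|β|!)^δ)` for `β ∈ ℤ₊²`. -/
noncomputable def Mr (σ δ ρ : ℝ) (β : ℕ × ℕ) : ℝ :=
  ρ ^ (β.1 + β.2 + 1) * (((β.1 + β.2 : ℕ) : ℝ) + 1) ^ (6 + 2 * σ) /
    ((Nat.factorial β.2 : ℝ) ^ (σ - δ) * (Nat.factorial (β.1 + β.2) : ℝ) ^ δ)

lemma vandermonde_le (b1 b2 g1 g2 : ℕ) :
    b1.choose g1 * b2.choose g2 ≤ (b1 + b2).choose (g1 + g2) := by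
  rw [Nat.add_choose_eq]
  exact Finset.single_le_sum (f := fun ij : ℕ × ℕ => b1.choose ij.1 * b2.choose ij.2)
    (a := (g1, g2)) (fun i _ => Nat.zero_le _) (Finset.HasAntidiagonal.mem_antidiagonal.mpr rfl)

lemma fact_mul_fact_le (m n : ℕ) (h : m ≤ n) :
    m.factorial * (n - m).factorial ≤ n.factorial := by
  have h1 := Nat.choose_mul_factorial_mul_factorial h
  calc m.factorial * (n - m).factorial
      ≤ n.choose m * (m.factorial * (n - m).factorial) :=
        Nat.le_mul_of_pos_left _ (Nat.choose_pos h)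
    _ = n.factorial := by rw [← h1]; ring

lemma self_le_rpow {x p : ℝ} (hx : 1 ≤ x) (hp : 1 ≤ p) : x ≤ x ^ p := by
  calc x = x ^ (1 : ℝ) := (Real.rpow_one x).symm
    _ ≤ x ^ p := Real.rpow_le_rpow_of_exponent_le hx hp

theorem binom_M_bound_low (σ δ ρ₀ : ℝ) (hσ : 1 ≤ σ) (hδ : 1 ≤ δ) (hδσ : δ ≤ σ)
    (hρ₀ : 0 < ρ₀) :
    ∃ C > 0, ∀ ρ : ℝ, ρ₀ / 4 ≤ ρ → ρ ≤ ρ₀ →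
      ∀ β γ : ℕ × ℕ, γ.1 ≤ β.1 → γ.2 ≤ β.2 → γ.1 + γ.2 ≤ (β.1 + β.2) / 2 →
        (Nat.choose β.1 γ.1 : ℝ) * (Nat.choose β.2 γ.2 : ℝ) * Mr σ δ ρ β /
            (Mr σ δ ρ γ * Mr σ δ ρ (β.1 - γ.1, β.2 - γ.2)) ≤
          C / (((γ.1 + γ.2 : ℕ) : ℝ) + 1) ^ 6 := by
  refine ⟨(2 : ℝ) ^ (6 + 2 * σ) * (4 / ρ₀), by positivity, ?_⟩
  intro ρ hρ1 hρ2 β γ h1 h2 h3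
  have hρ : 0 < ρ := lt_of_lt_of_le (by positivity) hρ1
  obtain ⟨b1, b2⟩ := β
  obtain ⟨g1, g2⟩ := γ
  simp only at h1 h2 h3 ⊢
  have he : (0:ℝ) ≤ σ - δ := by linarith
  have fpos : ∀ n : ℕ, (0:ℝ) < (Nat.factorial n : ℝ) := fun n => by
    exact_mod_cast Nat.factorial_pos n
  have hMg : 0 < Mr σ δ ρ (g1, g2) := by
    unfold Mr; dsimp only
    exact div_pos (mul_pos (pow_pos hρ _) (Real.rpow_pos_of_pos (by positivity) _))
      (mul_pos (Real.rpow_pos_of_pos (fpos g2) _) (Real.rpow_pos_of_pos (fpos _) _))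
  have hMd : 0 < Mr σ δ ρ (b1 - g1, b2 - g2) := by
    unfold Mr; dsimp only
    exact div_pos (mul_pos (pow_pos hρ _) (Real.rpow_pos_of_pos (by positivity) _))
      (mul_pos (Real.rpow_pos_of_pos (fpos (b2 - g2)) _) (Real.rpow_pos_of_pos (fpos _) _))
  have hg6 : (0:ℝ) < (((g1 + g2 : ℕ) : ℝ) + 1) ^ 6 := by positivity
  rw [div_le_div_iff₀ (mul_pos hMg hMd) hg6]
  unfold Mr
  dsimp only
  -- abbreviations
  set b := b1 + b2 with hbdef
  set g := g1 + g2 with hgdef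
  have hgleb : g ≤ b := by omega
  have hd12 : (b1 - g1) + (b2 - g2) = b - g := by omega
  rw [hd12]
  set d := b - g with hddef
  have hbd : b + 1 ≤ 2 * (d + 1) := by omega
  set Dg : ℝ := (Nat.factorial g2 : ℝ) ^ (σ - δ) * (Nat.factorial g : ℝ) ^ δ with hDgdef
  set Dd : ℝ := (Nat.factorial (b2 - g2) : ℝ) ^ (σ - δ) * (Nat.factorial d : ℝ) ^ δ with hDddef
  set Db : ℝ := (Nat.factorial b2 : ℝ) ^ (σ - δ) * (Nat.factorial b : ℝ) ^ δ with hDbdef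
  have hDg : 0 < Dg := mul_pos (Real.rpow_pos_of_pos (fpos g2) _) (Real.rpow_pos_of_pos (fpos _) _)
  have hDd : 0 < Dd := mul_pos (Real.rpow_pos_of_pos (fpos _) _) (Real.rpow_pos_of_pos (fpos _) _)
  have hDb : 0 < Db := mul_pos (Real.rpow_pos_of_pos (fpos b2) _) (Real.rpow_pos_of_pos (fpos _) _)
  set A : ℝ := (b1.choose g1 : ℝ) * (b2.choose g2 : ℝ) with hAdef
  have hA0 : 0 ≤ A := by rw [hAdef]; positivity
  set s : ℝ := 6 + 2 * σ with hsdef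
  have hs : (0:ℝ) ≤ s := by rw [hsdef]; linarith
  have h2spos : (0:ℝ) < (2:ℝ) ^ s := Real.rpow_pos_of_pos (by norm_num) s
  have hgpos : (0:ℝ) < (((g : ℕ) : ℝ) + 1) ^ s := Real.rpow_pos_of_pos (by positivity) s
  have hdpos : (0:ℝ) < (((d : ℕ) : ℝ) + 1) ^ s := Real.rpow_pos_of_pos (by positivity) s
  have hbpos : (0:ℝ) < (((b : ℕ) : ℝ) + 1) ^ s := Real.rpow_pos_of_pos (by positivity) s
  -- K1 : A * (Dg * Dd) ≤ Db
  have hK1 : A * (Dg * Dd) ≤ Db := by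
    have ha : (Nat.factorial g2 : ℝ) ^ (σ - δ) * (Nat.factorial (b2 - g2) : ℝ) ^ (σ - δ) ≤
        (Nat.factorial b2 : ℝ) ^ (σ - δ) := by
      rw [← Real.mul_rpow (le_of_lt (fpos g2)) (le_of_lt (fpos (b2 - g2)))]
      refine Real.rpow_le_rpow (by positivity) ?_ he
      exact_mod_cast fact_mul_fact_le g2 b2 h2
    have hnat : b.choose g * g.factorial * d.factorial = b.factorial := by
      rw [hddef]; exact Nat.choose_mul_factorial_mul_factorial hgleb
    have hc : A * ((Nat.factorial g : ℝ) ^ δ * (Nat.factorial d : ℝ) ^ δ) ≤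
        (Nat.factorial b : ℝ) ^ δ := by
      have hAv : A ≤ ((b.choose g : ℕ) : ℝ) := by
        rw [hAdef, hbdef, hgdef]
        exact_mod_cast vandermonde_le b1 b2 g1 g2
      have hch1 : (1:ℝ) ≤ ((b.choose g : ℕ) : ℝ) := by
        exact_mod_cast Nat.one_le_iff_ne_zero.mpr (Nat.choose_pos hgleb).ne'
      calc A * ((Nat.factorial g : ℝ) ^ δ * (Nat.factorial d : ℝ) ^ δ)
          ≤ ((b.choose g : ℕ) : ℝ) ^ δ *
            ((Nat.factorial g : ℝ) ^ δ * (Nat.factorial d : ℝ) ^ δ) :=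
            mul_le_mul_of_nonneg_right (hAv.trans (self_le_rpow hch1 hδ)) (by positivity)
        _ = (((b.choose g : ℕ) : ℝ) * ((Nat.factorial g : ℝ) * (Nat.factorial d : ℝ))) ^ δ := by
            rw [Real.mul_rpow (by positivity) (by positivity),
              Real.mul_rpow (le_of_lt (fpos g)) (le_of_lt (fpos d))]
        _ = (Nat.factorial b : ℝ) ^ δ := by
            congr 1
            push_cast [← hnat]
            ring
    calc A * (Dg * Dd)
        = (Nat.factorial g2 : ℝ) ^ (σ - δ) * (Nat.factorial (b2 - g2) : ℝ) ^ (σ - δ) *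
          (A * ((Nat.factorial g : ℝ) ^ δ * (Nat.factorial d : ℝ) ^ δ)) := by
          rw [hDgdef, hDddef]; ring
      _ ≤ (Nat.factorial b2 : ℝ) ^ (σ - δ) * (Nat.factorial b : ℝ) ^ δ :=
          mul_le_mul ha hc (by positivity) (by positivity)
      _ = Db := hDbdef.symm
  -- K2
  have hK2 : (((b : ℕ) : ℝ) + 1) ^ s ≤ (2:ℝ) ^ s * (((d : ℕ) : ℝ) + 1) ^ s := by
    have hble : ((b : ℕ) : ℝ) + 1 ≤ 2 * (((d : ℕ) : ℝ) + 1) := by exact_mod_cast hbd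
    calc (((b : ℕ) : ℝ) + 1) ^ s ≤ (2 * (((d : ℕ) : ℝ) + 1)) ^ s :=
          Real.rpow_le_rpow (by positivity) hble hs
      _ = (2:ℝ) ^ s * (((d : ℕ) : ℝ) + 1) ^ s :=
          Real.mul_rpow (by norm_num) (by positivity)
  -- K3
  have hK3 : (((g : ℕ) : ℝ) + 1) ^ (6:ℕ) ≤ (((g : ℕ) : ℝ) + 1) ^ s := by
    have h1g : (1:ℝ) ≤ ((g : ℕ) : ℝ) + 1 := le_add_of_nonneg_left (Nat.cast_nonneg g)
    calc (((g : ℕ) : ℝ) + 1) ^ (6:ℕ) = (((g : ℕ) : ℝ) + 1) ^ ((6:ℕ) : ℝ) :=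
          (Real.rpow_natCast _ 6).symm
      _ ≤ (((g : ℕ) : ℝ) + 1) ^ s := by
          refine Real.rpow_le_rpow_of_exponent_le h1g ?_
          rw [hsdef]; push_cast; linarith
  -- combine
  have key : A * (((b : ℕ) : ℝ) + 1) ^ s * ((((g : ℕ) : ℝ) + 1) ^ (6:ℕ)) * (Dg * Dd) ≤
      (2:ℝ) ^ s * ((((g : ℕ) : ℝ) + 1) ^ s * (((d : ℕ) : ℝ) + 1) ^ s) * Db := by
    calc A * (((b : ℕ) : ℝ) + 1) ^ s * ((((g : ℕ) : ℝ) + 1) ^ (6:ℕ)) * (Dg * Dd)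
        = (A * (Dg * Dd)) * ((((b : ℕ) : ℝ) + 1) ^ s) * ((((g : ℕ) : ℝ) + 1) ^ (6:ℕ)) := by
          ring
      _ ≤ Db * ((2:ℝ) ^ s * (((d : ℕ) : ℝ) + 1) ^ s) * ((((g : ℕ) : ℝ) + 1) ^ s) :=
          mul_le_mul (mul_le_mul hK1 hK2 (le_of_lt hbpos) (le_of_lt hDb)) hK3
            (by positivity) (le_of_lt (mul_pos hDb (mul_pos h2spos hdpos)))
      _ = (2:ℝ) ^ s * ((((g : ℕ) : ℝ) + 1) ^ s * (((d : ℕ) : ℝ) + 1) ^ s) * Db := by ring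
  -- power identity
  have hpow : ρ ^ (g + 1) * ρ ^ (d + 1) = ρ * ρ ^ (b + 1) := by
    rw [← pow_add, ← pow_succ']
    congr 1
    omega
  have hCρ : (2:ℝ) ^ s ≤ ((2:ℝ) ^ s * (4 / ρ₀)) * ρ := by
    have h4 : (1:ℝ) ≤ (4 / ρ₀) * ρ := by
      rw [div_mul_eq_mul_div, le_div_iff₀ hρ₀]
      linarith
    calc (2:ℝ) ^ s = (2:ℝ) ^ s * 1 := (mul_one _).symm
      _ ≤ (2:ℝ) ^ s * ((4 / ρ₀) * ρ) := mul_le_mul_of_nonneg_left h4 (le_of_lt h2spos)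
      _ = ((2:ℝ) ^ s * (4 / ρ₀)) * ρ := by ring
  -- main inequality with cleared denominators
  have main : (A * (ρ ^ (b + 1) * (((b : ℕ) : ℝ) + 1) ^ s) * ((((g : ℕ) : ℝ) + 1) ^ (6:ℕ))) *
      (Dg * Dd) ≤
      ((2:ℝ) ^ s * (4 / ρ₀) *
        (ρ ^ (g + 1) * (((g : ℕ) : ℝ) + 1) ^ s * (ρ ^ (d + 1) * (((d : ℕ) : ℝ) + 1) ^ s))) *
      Db := by
    calc (A * (ρ ^ (b + 1) * (((b : ℕ) : ℝ) + 1) ^ s) * ((((g : ℕ) : ℝ) + 1) ^ (6:ℕ))) *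
          (Dg * Dd)
        = ρ ^ (b + 1) *
          (A * (((b : ℕ) : ℝ) + 1) ^ s * ((((g : ℕ) : ℝ) + 1) ^ (6:ℕ)) * (Dg * Dd)) := by
          ring
      _ ≤ ρ ^ (b + 1) *
          ((2:ℝ) ^ s * ((((g : ℕ) : ℝ) + 1) ^ s * (((d : ℕ) : ℝ) + 1) ^ s) * Db) :=
          mul_le_mul_of_nonneg_left key (by positivity)
      _ = (2:ℝ) ^ s *
          (ρ ^ (b + 1) * ((((g : ℕ) : ℝ) + 1) ^ s * (((d : ℕ) : ℝ) + 1) ^ s * Db)) := by ring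
      _ ≤ ((2:ℝ) ^ s * (4 / ρ₀) * ρ) *
          (ρ ^ (b + 1) * ((((g : ℕ) : ℝ) + 1) ^ s * (((d : ℕ) : ℝ) + 1) ^ s * Db)) :=
          mul_le_mul_of_nonneg_right hCρ
            (le_of_lt (mul_pos (pow_pos hρ _) (mul_pos (mul_pos hgpos hdpos) hDb)))
      _ = ((2:ℝ) ^ s * (4 / ρ₀) *
            (ρ ^ (g + 1) * (((g : ℕ) : ℝ) + 1) ^ s * (ρ ^ (d + 1) * (((d : ℕ) : ℝ) + 1) ^ s))) *
          Db := by
          linear_combination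
            (-((2:ℝ) ^ s * (4 / ρ₀) * ((((g : ℕ) : ℝ) + 1) ^ s * (((d : ℕ) : ℝ) + 1) ^ s * Db))) *
              hpow
  have step : (A * (ρ ^ (b + 1) * (((b : ℕ) : ℝ) + 1) ^ s) * ((((g : ℕ) : ℝ) + 1) ^ (6:ℕ))) / Db ≤
      ((2:ℝ) ^ s * (4 / ρ₀) *
        (ρ ^ (g + 1) * (((g : ℕ) : ℝ) + 1) ^ s * (ρ ^ (d + 1) * (((d : ℕ) : ℝ) + 1) ^ s))) /
      (Dg * Dd) := by
    rw [div_le_div_iff₀ hDb (mul_pos hDg hDd)]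
    exact main
  refine le_trans (le_of_eq ?_) (le_trans step (le_of_eq ?_))
  · rw [hAdef]; ring
  · ring
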